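/- Assume r and θ are nonconstant and the parametrization is proper. Then the curve has infinitely many self-intersection points if and only if the set of integers k for which at least one of the two systems (*)₁: r(t) = r(s) and θ(t) = θ(s) + 2kπ, or (*)₂: r(t) = −r(s) and θ(t) = θ(s) + (2k+1)π, admits a solution (t,s) ∈ Ω × Ω with t ≠ s, is infinite. -/

import Mathlib

/-- The domain Ω = {t : B(t) ≠ 0 and D(t) ≠ 0}. -/
def polarDomain (B D : Polynomial ℝ) : Set ℝ :=
  {t : ℝ | B.eval t ≠ 0 ∧ D.eval t ≠ 0}

/-- The rational function defined by a pair of polynomials, e.g. r(t) = A(t)/B(t). -/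
noncomputable def ratFun (A B : Polynomial ℝ) (t : ℝ) : ℝ :=
  A.eval t / B.eval t

/-- The curve in Cartesian coordinates: P(t) = (r(t)·cos(θ(t)), r(t)·sin(θ(t))). -/
noncomputable def polarCurve (A B C D : Polynomial ℝ) (t : ℝ) : ℝ × ℝ :=
  (ratFun A B t * Real.cos (ratFun C D t), ratFun A B t * Real.sin (ratFun C D t))

/-- Properness: outside a finite set F, (r(t), θ(t)) = (r(s), θ(s)) implies t = s. -/
def IsProperPolar (A B C D : Polynomial ℝ) : Prop :=
  ∃ F : Set ℝ, F.Finite ∧ ∀ t s : ℝ, t ∈ polarDomain B D → s ∈ polarDomain B D →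
    t ∉ F → s ∉ F → ratFun A B t = ratFun A B s → ratFun C D t = ratFun C D s → t = s

/-- The set of self-intersection points of the curve. -/
noncomputable def selfIntersections (A B C D : Polynomial ℝ) : Set (ℝ × ℝ) :=
  {p : ℝ × ℝ | ∃ t s : ℝ, t ∈ polarDomain B D ∧ s ∈ polarDomain B D ∧ t ≠ s ∧
    polarCurve A B C D t = p ∧ polarCurve A B C D s = p}

/-!
If `P(t) = P(s) ≠ 0` then `r(t) = ± r(s)` and `θ(t) - θ(s)` is a multiple of `π`, so the pair
`(t, s)` solves `(*)₁` or `(*)₂` for exactly one `k`. The curve has finite fibres (`r²` has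
finite level sets), so finitely many self-intersections give finitely many `k`.

Conversely each `k` has finitely many solutions. For `(*)₁` with `k = 0` this is properness.
Otherwise `r²(t) = r²(s)` and `θ(t) = θ(s) + δ` with `δ ≠ 0`. Suppose there are infinitely
many such pairs, and take `H ≠ 0` with `H(r, θ) = 0` on `Ω` (it exists by counting
dimensions, since `r` and `θ` are rational). After clearing denominators `H(r, θ - δ)`
vanishes at infinitely many `t`, hence on all of `Ω`; iterating, `H(r(u), θ(u) - nδ) = 0` for
all `n`, so `H(r(u), ·) = 0` and `r` is a root of the leading coefficient of `H`,
contradicting that `r` is nonconstant.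
-/

open Polynomial Set Real
open scoped Polynomial.Bivariate

theorem natDegree_pow_mul_pow_le {R : Type*} [Semiring R] (A B : R[X]) {i n : ℕ} (hi : i ≤ n) :
    (A ^ i * B ^ (n - i)).natDegree ≤ n * max A.natDegree B.natDegree :=
  calc _ ≤ i * max A.natDegree B.natDegree + (n - i) * max A.natDegree B.natDegree :=
        natDegree_mul_le_of_le (natDegree_pow_le_of_le i (le_max_left _ _))
          (natDegree_pow_le_of_le _ (le_max_right _ _))
    _ = n * max A.natDegree B.natDegree := by rw [← add_mul, Nat.add_sub_cancel' hi]

theorem evalEval_taylor_C {R : Type*} [CommSemiring R] (H : R[X][Y]) (x y c : R) :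
    (taylor (C c) H).evalEval x y = H.evalEval x (y + c) := by
  simp [evalEval, taylor_eval]

theorem map_evalRingHom_eq_zero_of_evalEval_add_mul {K : Type*} [Field K] [CharZero K]
    {H : K[X][Y]} {x y c : K} (hc : c ≠ 0) (h : ∀ n : ℕ, H.evalEval x (y + n * c) = 0) :
    H.map (evalRingHom x) = 0 := by
  refine eq_zero_of_infinite_isRoot _ <|
    infinite_of_injective_forall_mem (f := fun n : ℕ => y + n * c) (fun m n hmn => ?_) fun n => ?_
  · simpa [hc] using hmn
  · simp [map_evalRingHom_eval, h n]

def IsClearableOn {R : Type*} [CommRing R] (P : R[X]) (U : Set R) (φ : R → R) : Prop :=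
  ∃ (W : R[X]) (n : ℕ), ∀ u ∈ U, W.eval u = P.eval u ^ n * φ u

namespace IsClearableOn

variable {R : Type*} [CommRing R] {P : R[X]} {U : Set R} {φ ψ : R → R}

theorem const (c : R) : IsClearableOn P U fun _ => c := ⟨C c, 0, by simp⟩

theorem add (hφ : IsClearableOn P U φ) (hψ : IsClearableOn P U ψ) :
    IsClearableOn P U fun u => φ u + ψ u := by
  obtain ⟨W₁, n₁, h₁⟩ := hφ
  obtain ⟨W₂, n₂, h₂⟩ := hψ
  refine ⟨W₁ * P ^ n₂ + W₂ * P ^ n₁, n₁ + n₂, fun u hu => ?_⟩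
  simp only [eval_add, eval_mul, eval_pow, h₁ u hu, h₂ u hu]
  ring

theorem mul (hφ : IsClearableOn P U φ) (hψ : IsClearableOn P U ψ) :
    IsClearableOn P U fun u => φ u * ψ u := by
  obtain ⟨W₁, n₁, h₁⟩ := hφ
  obtain ⟨W₂, n₂, h₂⟩ := hψ
  refine ⟨W₁ * W₂, n₁ + n₂, fun u hu => ?_⟩
  simp only [eval_mul, h₁ u hu, h₂ u hu]
  ring

theorem eval (hφ : IsClearableOn P U φ) (a : R[X]) :
    IsClearableOn P U fun u => a.eval (φ u) := by
  induction a using Polynomial.induction_on with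
  | C c => simpa using const c
  | add p q hp hq => simpa only [eval_add] using hp.add hq
  | monomial n c ih =>
    simpa only [eval_mul, eval_pow, eval_X, pow_succ, mul_assoc] using ih.mul hφ

theorem evalEval (hφ : IsClearableOn P U φ) (hψ : IsClearableOn P U ψ) (H : R[X][Y]) :
    IsClearableOn P U fun u => H.evalEval (φ u) (ψ u) := by
  induction H using Polynomial.induction_on with
  | C a => simpa only [evalEval_C] using hφ.eval a
  | add p q hp hq => simpa only [evalEval_add] using hp.add hq
  | monomial n a ih =>
    simpa only [evalEval_mul, evalEval_pow, evalEval_X, pow_succ, mul_assoc] using ih.mul hψ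

theorem eq_zero_of_infinite [IsDomain R] {T : Set R} (hφ : IsClearableOn P U φ)
    (hP : ∀ u ∈ U, P.eval u ≠ 0) (hTU : T ⊆ U) (hT : T.Infinite) (hzero : ∀ u ∈ T, φ u = 0)
    {u : R} (hu : u ∈ U) : φ u = 0 := by
  obtain ⟨W, n, hW⟩ := hφ
  have hW0 : W = 0 := eq_zero_of_infinite_isRoot W <| hT.mono fun t ht => by
    simp [IsRoot, hW t (hTU ht), hzero t ht]
  simpa [hW0, hP u hu] using (hW u hu).symm

end IsClearableOn

structure IsReducedNonconst (A B : ℝ[X]) : Prop where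
  isCoprime : IsCoprime A B
  not_const : ¬ (A.natDegree = 0 ∧ B.natDegree = 0)

namespace IsReducedNonconst

variable {A B : ℝ[X]}

theorem pow (h : IsReducedNonconst A B) {n : ℕ} (hn : n ≠ 0) :
    IsReducedNonconst (A ^ n) (B ^ n) :=
  ⟨h.isCoprime.pow, by simpa [natDegree_pow, hn] using h.not_const⟩

theorem sub_C_mul_ne_zero (h : IsReducedNonconst A B) (c : ℝ) : A - C c * B ≠ 0 := by
  intro hAB
  rw [sub_eq_zero] at hAB
  have hB : B.natDegree = 0 :=
    natDegree_eq_zero_of_isUnit (h.isCoprime.isUnit_of_dvd' (hAB ▸ dvd_mul_left B (C c)) dvd_rfl)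
  refine h.not_const ⟨?_, hB⟩
  have := natDegree_C_mul_le c B
  rwa [← hAB, hB, Nat.le_zero] at this

theorem finite_setOf_ratFun_eq (h : IsReducedNonconst A B) (c : ℝ) :
    {t | B.eval t ≠ 0 ∧ ratFun A B t = c}.Finite := by
  refine (finite_setOfPred_isRoot (h.sub_C_mul_ne_zero c)).subset ?_
  rintro t ⟨hBt, hc⟩
  rw [ratFun, div_eq_iff hBt] at hc
  simp [hc]

end IsReducedNonconst

theorem ratFun_pow (A B : ℝ[X]) (n : ℕ) (t : ℝ) :
    ratFun (A ^ n) (B ^ n) t = ratFun A B t ^ n := by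
  simp [ratFun, div_pow]

theorem polarDomain_pow (B D : ℝ[X]) {n : ℕ} (hn : n ≠ 0) :
    polarDomain (B ^ n) D = polarDomain B D := by
  simp [polarDomain, hn]

theorem eval_mul_ne_zero_of_mem_polarDomain {B D : ℝ[X]} {u : ℝ} (hu : u ∈ polarDomain B D) :
    (B * D).eval u ≠ 0 := by
  simpa [eval_mul] using (show B.eval u ≠ 0 ∧ D.eval u ≠ 0 from hu)

theorem isClearableOn_ratFun {A B P : ℝ[X]} {U : Set ℝ} (hBP : B ∣ P)
    (hB : ∀ u ∈ U, B.eval u ≠ 0) : IsClearableOn P U (ratFun A B) := by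
  obtain ⟨Q, rfl⟩ := hBP
  refine ⟨A * Q, 1, fun u hu => ?_⟩
  simp only [ratFun, eval_mul, pow_one]
  field_simp [hB u hu]

theorem evalEval_ratFun_eq_zero_of_infinite {A B C D : ℝ[X]} (H : ℝ[X][Y]) {T : Set ℝ}
    (hTΩ : T ⊆ polarDomain B D) (hT : T.Infinite)
    (hzero : ∀ u ∈ T, H.evalEval (ratFun A B u) (ratFun C D u) = 0) {u : ℝ}
    (hu : u ∈ polarDomain B D) : H.evalEval (ratFun A B u) (ratFun C D u) = 0 :=
  ((isClearableOn_ratFun (dvd_mul_right B D) fun _ hu => hu.1).evalEval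
    (isClearableOn_ratFun (dvd_mul_left D B) fun _ hu => hu.2) H).eq_zero_of_infinite
    (fun _ hu => eval_mul_ne_zero_of_mem_polarDomain hu) hTΩ hT hzero hu

theorem ratFun_pow_mul_eval_pow (A B : ℝ[X]) {i n : ℕ} (hi : i ≤ n) {u : ℝ}
    (hB : B.eval u ≠ 0) :
    ratFun A B u ^ i * B.eval u ^ n = A.eval u ^ i * B.eval u ^ (n - i) := by
  rw [ratFun, ← Nat.add_sub_cancel' hi, pow_add, Nat.add_sub_cancel_left, div_pow]
  field_simp

theorem eval_mul_pow_mul_ratFun_pow_mul_ratFun_pow {A B C D : ℝ[X]} {u : ℝ}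
    (hu : u ∈ polarDomain B D) {i j n : ℕ} (hi : i ≤ n) (hj : j ≤ n) :
    (B.eval u * D.eval u) ^ n * (ratFun A B u ^ i * ratFun C D u ^ j) =
      (A ^ i * B ^ (n - i) * (C ^ j * D ^ (n - j))).eval u := by
  calc _ = (ratFun A B u ^ i * B.eval u ^ n) * (ratFun C D u ^ j * D.eval u ^ n) := by ring
    _ = _ := by
      rw [ratFun_pow_mul_eval_pow A B hi hu.1, ratFun_pow_mul_eval_pow C D hj hu.2]
      simp only [eval_mul, eval_pow]

theorem exists_ne_zero_evalEval_ratFun_eq_zero (A B C D : ℝ[X]) :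
    ∃ H : ℝ[X][Y], H ≠ 0 ∧
      ∀ u ∈ polarDomain B D, H.evalEval (ratFun A B u) (ratFun C D u) = 0 := by
  set a := max A.natDegree B.natDegree
  set c := max C.natDegree D.natDegree
  set n := a + c + 1
  set m := n * (a + c) + 1
  -- the `(n + 1) ^ 2` monomials `r ^ i θ ^ j`, cleared by `(B D) ^ n`, have degree
  -- `< m < (n + 1) ^ 2`, so they are linearly dependent
  let v : Fin (n + 1) × Fin (n + 1) → degreeLT ℝ m := fun k =>
    ⟨A ^ (k.1 : ℕ) * B ^ (n - k.1) * (C ^ (k.2 : ℕ) * D ^ (n - k.2)), by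
      rw [mem_degreeLT]
      refine degree_le_natDegree.trans_lt (WithBot.coe_lt_coe.mpr (Nat.lt_succ_of_le ?_))
      rw [mul_add]
      exact natDegree_mul_le_of_le (natDegree_pow_mul_pow_le A B (Nat.lt_succ_iff.mp k.1.2))
        (natDegree_pow_mul_pow_le C D (Nat.lt_succ_iff.mp k.2.2))⟩
  have : Module.Finite ℝ (degreeLT ℝ m) := (degreeLTEquiv ℝ m).symm.finiteDimensional
  have hdep : ¬ LinearIndependent ℝ v := fun h => by
    have := h.fintype_card_le_finrank
    rw [(degreeLTEquiv ℝ m).finrank_eq, Module.finrank_fin_fun, Fintype.card_prod,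
      Fintype.card_fin] at this
    simp only [m, n] at this
    nlinarith
  obtain ⟨g, hg, k₀, hk₀⟩ := Fintype.not_linearIndependent_iff.mp hdep
  refine ⟨∑ k, monomial k.2 (monomial k.1 (g k)), fun hH => hk₀ ?_, fun u hu => ?_⟩
  · have := congrArg (fun H : ℝ[X][Y] => (H.coeff k₀.2).coeff k₀.1) hH
    simp only [finsetSum_coeff, coeff_monomial] at this
    simpa [apply_ite (coeff · (k₀.1 : ℕ)), coeff_monomial, Fin.val_inj, ← ite_and,
      and_comm, ← Prod.ext_iff] using this
  · have hcleared : (B.eval u * D.eval u) ^ n *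
        (∑ k, monomial k.2 (monomial k.1 (g k))).evalEval (ratFun A B u) (ratFun C D u) =
          ((∑ k, g k • v k : degreeLT ℝ m) : ℝ[X]).eval u := by
      simp only [Submodule.coe_sum, Submodule.coe_smul, eval_finsetSum, evalEval_finsetSum,
        Finset.mul_sum, eval_smul, smul_eq_mul]
      refine Finset.sum_congr rfl fun k _ => ?_
      rw [← eval_mul_pow_mul_ratFun_pow_mul_ratFun_pow hu (Nat.lt_succ_iff.mp k.1.2)
        (Nat.lt_succ_iff.mp k.2.2)]
      simp only [evalEval, eval_monomial, eval_mul, eval_C, eval_pow]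
      ring
    rw [hg, ZeroMemClass.coe_zero, eval_zero] at hcleared
    exact (mul_eq_zero.mp hcleared).resolve_left
      (pow_ne_zero _ (by simpa using eval_mul_ne_zero_of_mem_polarDomain hu))

theorem IsReducedNonconst.finite_of_eval_ratFun_eq_zero {A B : ℝ[X]} (hr : IsReducedNonconst A B)
    {h : ℝ[X]} (hh : h ≠ 0) {U : Set ℝ} (hU : ∀ u ∈ U, B.eval u ≠ 0)
    (hroot : ∀ u ∈ U, h.eval (ratFun A B u) = 0) : U.Finite := by
  refine .of_finite_fibers (ratFun A B) ((finite_setOfPred_isRoot hh).subset ?_) fun x _ => ?_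
  · rintro _ ⟨u, hu, rfl⟩
    exact hroot u hu
  · exact (hr.finite_setOf_ratFun_eq x).subset fun u ⟨hu, hx⟩ => ⟨hU u hu, hx⟩

theorem finite_setOf_ratFun_eq_and_ratFun_eq_add {A B C D : ℝ[X]} (hr : IsReducedNonconst A B)
    (hθ : IsReducedNonconst C D) {δ : ℝ} (hδ : δ ≠ 0) :
    {p : ℝ × ℝ | p.1 ∈ polarDomain B D ∧ p.2 ∈ polarDomain B D ∧
      ratFun A B p.1 = ratFun A B p.2 ∧ ratFun C D p.1 = ratFun C D p.2 + δ}.Finite := by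
  set S := {p : ℝ × ℝ | p.1 ∈ polarDomain B D ∧ p.2 ∈ polarDomain B D ∧
      ratFun A B p.1 = ratFun A B p.2 ∧ ratFun C D p.1 = ratFun C D p.2 + δ}
  by_contra hS
  have hT : (Prod.fst '' S).Infinite := fun hT => hS <| hT.of_finite_fibers Prod.fst fun t _ =>
    ((finite_singleton t).prod (hθ.finite_setOf_ratFun_eq (ratFun C D t - δ))).subset
      fun ⟨t', s⟩ ⟨⟨_, hs, _, hθts⟩, ht⟩ => ⟨ht, hs.2, by simp_all⟩
  have hTΩ : Prod.fst '' S ⊆ polarDomain B D := by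
    rintro _ ⟨p, hp, rfl⟩
    exact hp.1
  have hshift : ∀ H : ℝ[X][Y],
      (∀ u ∈ polarDomain B D, H.evalEval (ratFun A B u) (ratFun C D u) = 0) →
      ∀ u ∈ polarDomain B D,
        (taylor (Polynomial.C (-δ)) H).evalEval (ratFun A B u) (ratFun C D u) = 0 := by
    refine fun H hH u hu => evalEval_ratFun_eq_zero_of_infinite _ hTΩ hT ?_ hu
    rintro _ ⟨⟨t, s⟩, ⟨-, hs, hrts, hθts⟩, rfl⟩
    rw [evalEval_taylor_C, hrts, hθts, add_neg_cancel_right]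
    exact hH s hs
  obtain ⟨H, hH0, hH⟩ := exists_ne_zero_evalEval_ratFun_eq_zero A B C D
  have hiter : ∀ n : ℕ, ∀ u ∈ polarDomain B D,
      (taylor (Polynomial.C (-(n * δ))) H).evalEval (ratFun A B u) (ratFun C D u) = 0 := by
    intro n
    induction n with
    | zero => simpa using hH
    | succ n ih =>
      have h := hshift _ ih
      rwa [taylor_taylor, ← C_add,
        show -δ + -(n * δ) = -((n + 1 : ℕ) * δ) by push_cast; ring] at h
  -- each `H (r u) ·` vanishes at all `θ u - n δ`, so the leading coefficient of `H` kills `r`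
  refine hT <| (hr.finite_of_eval_ratFun_eq_zero (leadingCoeff_ne_zero.mpr hH0)
    (fun u hu => (hTΩ hu).1) fun u hu => ?_)
  have hmap := map_evalRingHom_eq_zero_of_evalEval_add_mul (neg_ne_zero.mpr hδ)
    fun n => by simpa only [evalEval_taylor_C, mul_neg] using hiter n u (hTΩ hu)
  simpa using congrArg (coeff · H.natDegree) hmap

theorem sq_mul_cos_add_sq_mul_sin (r θ : ℝ) : (r * cos θ) ^ 2 + (r * sin θ) ^ 2 = r ^ 2 := by
  rw [mul_pow, mul_pow, ← mul_add, cos_sq_add_sin_sq, mul_one]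

theorem exists_int_eq_add_two_mul_pi {x y : ℝ} (hcos : cos x = cos y) (hsin : sin x = sin y) :
    ∃ k : ℤ, x = y + 2 * k * π := by
  obtain ⟨k, hk⟩ := Angle.angle_eq_iff_two_pi_dvd_sub.mp (Angle.cos_sin_inj hcos hsin)
  exact ⟨k, by linarith⟩

/-- The systems `(*)₁ ∨ (*)₂` for `k`, at polar coordinates `(r, θ)` and `(r', θ')`. -/
def PolarRel (k : ℤ) (r θ r' θ' : ℝ) : Prop :=
  (r = r' ∧ θ = θ' + 2 * (k : ℝ) * π) ∨ (r = -r' ∧ θ = θ' + (2 * (k : ℝ) + 1) * π)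

namespace PolarRel

variable {k : ℤ} {r θ r' θ' : ℝ}

theorem polar_eq (h : PolarRel k r θ r' θ') :
    (r * cos θ, r * sin θ) = (r' * cos θ', r' * sin θ') := by
  rcases h with ⟨rfl, rfl⟩ | ⟨rfl, rfl⟩
  · rw [show θ' + 2 * k * π = θ' + k * (2 * π) by ring, cos_add_int_mul_two_pi,
      sin_add_int_mul_two_pi]
  · rw [show θ' + (2 * k + 1) * π = θ' + π + k * (2 * π) by ring, cos_add_int_mul_two_pi,
      sin_add_int_mul_two_pi, cos_add_pi, sin_add_pi]
    simp

theorem sq_eq (h : PolarRel k r θ r' θ') : r ^ 2 = r' ^ 2 := by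
  rcases h with ⟨rfl, -⟩ | ⟨rfl, -⟩ <;> ring

theorem exists_int (h : PolarRel k r θ r' θ') :
    ∃ m : ℤ, θ = θ' + m * π ∧ (m = 2 * k ∨ m = 2 * k + 1) := by
  rcases h with ⟨-, h⟩ | ⟨-, h⟩
  · exact ⟨2 * k, by push_cast; exact h, .inl rfl⟩
  · exact ⟨2 * k + 1, by push_cast; exact h, .inr rfl⟩

theorem unique {k' : ℤ} (h : PolarRel k r θ r' θ') (h' : PolarRel k' r θ r' θ') : k = k' := by
  obtain ⟨m, hm, hk⟩ := h.exists_int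
  obtain ⟨m', hm', hk'⟩ := h'.exists_int
  have : m = m' := by
    exact_mod_cast mul_right_cancel₀ pi_ne_zero (by linarith : (m : ℝ) * π = m' * π)
  omega

theorem eq_of_angle_eq (h : PolarRel k r θ r' θ) : r = r' := by
  rcases h with ⟨h, -⟩ | ⟨-, h⟩
  · exact h
  · have : ((2 * k + 1 : ℤ) : ℝ) = 0 := by
      push_cast
      exact (mul_eq_zero.mp (by linarith)).resolve_right pi_ne_zero
    have : 2 * k + 1 = 0 := by exact_mod_cast this
    omega

end PolarRel

theorem exists_polarRel_of_polar_eq {r θ r' θ' : ℝ} (hr : r ≠ 0)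
    (h : (r * cos θ, r * sin θ) = (r' * cos θ', r' * sin θ')) :
    ∃ k : ℤ, PolarRel k r θ r' θ' := by
  obtain ⟨hcos, hsin⟩ := Prod.mk.inj h
  have hsq : r ^ 2 = r' ^ 2 := by
    rw [← sq_mul_cos_add_sq_mul_sin r θ, ← sq_mul_cos_add_sq_mul_sin r' θ', hcos, hsin]
  rcases sq_eq_sq_iff_eq_or_eq_neg.mp hsq with rfl | rfl
  · obtain ⟨k, hk⟩ :=
      exists_int_eq_add_two_mul_pi (mul_left_cancel₀ hr hcos) (mul_left_cancel₀ hr hsin)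
    exact ⟨k, .inl ⟨rfl, hk⟩⟩
  · have hr' : r' ≠ 0 := neg_ne_zero.mp hr
    obtain ⟨k, hk⟩ := exists_int_eq_add_two_mul_pi (x := θ) (y := θ' + π)
      (mul_left_cancel₀ hr' (by rw [cos_add_pi]; linarith))
      (mul_left_cancel₀ hr' (by rw [sin_add_pi]; linarith))
    exact ⟨k, .inr ⟨rfl, by rw [hk]; ring⟩⟩

def polarShifts (A B C D : ℝ[X]) : Set ℤ :=
  {k | ∃ t s, t ∈ polarDomain B D ∧ s ∈ polarDomain B D ∧ t ≠ s ∧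
    PolarRel k (ratFun A B t) (ratFun C D t) (ratFun A B s) (ratFun C D s)}

def polarSolutions (A B C D : ℝ[X]) (k : ℤ) : Set (ℝ × ℝ) :=
  {p | p.1 ∈ polarDomain B D ∧ p.2 ∈ polarDomain B D ∧ p.1 ≠ p.2 ∧
    PolarRel k (ratFun A B p.1) (ratFun C D p.1) (ratFun A B p.2) (ratFun C D p.2)}

section PolarCurve

variable {A B C D : ℝ[X]}

theorem IsProperPolar.finite_setOf_ne_and_ratFun_eq (hproper : IsProperPolar A B C D)
    (hθ : IsReducedNonconst C D) :
    {p : ℝ × ℝ | p.1 ∈ polarDomain B D ∧ p.2 ∈ polarDomain B D ∧ p.1 ≠ p.2 ∧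
      ratFun A B p.1 = ratFun A B p.2 ∧ ratFun C D p.1 = ratFun C D p.2}.Finite := by
  obtain ⟨F, hF, hinj⟩ := hproper
  have hlevel := fun a => hθ.finite_setOf_ratFun_eq (ratFun C D a)
  refine ((hF.biUnion fun a _ => (finite_singleton a).prod (hlevel a)).union
    (hF.biUnion fun a _ => (hlevel a).prod (finite_singleton a))).subset ?_
  rintro ⟨t, s⟩ ⟨ht, hs, hne, hrts, hθts⟩
  by_cases htF : t ∈ F
  · exact .inl (mem_biUnion htF ⟨rfl, hs.2, hθts.symm⟩)
  by_cases hsF : s ∈ F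
  · exact .inr (mem_biUnion hsF ⟨⟨ht.2, hθts⟩, rfl⟩)
  exact absurd (hinj t s ht hs htF hsF hrts hθts) hne

theorem finite_polarSolutions (hr : IsReducedNonconst A B) (hθ : IsReducedNonconst C D)
    (hproper : IsProperPolar A B C D) (k : ℤ) : (polarSolutions A B C D k).Finite := by
  have hpart : ∀ δ, {p : ℝ × ℝ | p.1 ∈ polarDomain B D ∧ p.2 ∈ polarDomain B D ∧
      ratFun A B p.1 ^ 2 = ratFun A B p.2 ^ 2 ∧ ratFun C D p.1 = ratFun C D p.2 + δ ∧
      ratFun C D p.1 ≠ ratFun C D p.2}.Finite := by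
    intro δ
    rcases eq_or_ne δ 0 with rfl | hδ
    · exact finite_empty.subset fun p hp => hp.2.2.2.2 (by simpa using hp.2.2.2.1)
    · refine (finite_setOf_ratFun_eq_and_ratFun_eq_add (hr.pow two_ne_zero) hθ hδ).subset ?_
      rintro p ⟨h₁, h₂, hr₂, hθ₂, -⟩
      simp only [polarDomain_pow B D two_ne_zero, ratFun_pow]
      exact ⟨h₁, h₂, hr₂, hθ₂⟩
  refine ((hproper.finite_setOf_ne_and_ratFun_eq hθ).union
    ((hpart (2 * k * π)).union (hpart ((2 * k + 1) * π)))).subset ?_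
  rintro ⟨t, s⟩ ⟨ht, hs, hne, hk⟩
  by_cases hθts : ratFun C D t = ratFun C D s
  · exact .inl ⟨ht, hs, hne, (hθts ▸ hk).eq_of_angle_eq, hθts⟩
  have hsq := hk.sq_eq
  rcases hk with ⟨-, hθk⟩ | ⟨-, hθk⟩
  · exact .inr (.inl ⟨ht, hs, hsq, hθk, hθts⟩)
  · exact .inr (.inr ⟨ht, hs, hsq, hθk, hθts⟩)

theorem finite_polarFiber (hr : IsReducedNonconst A B) (p : ℝ × ℝ) :
    (polarDomain B D ∩ polarCurve A B C D ⁻¹' {p}).Finite := by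
  refine ((hr.pow two_ne_zero).finite_setOf_ratFun_eq (p.1 ^ 2 + p.2 ^ 2)).subset ?_
  rintro t ⟨ht, rfl⟩
  exact ⟨by simpa using ht.1, by rw [ratFun_pow, polarCurve, sq_mul_cos_add_sq_mul_sin]⟩

theorem selfIntersections_subset (A B C D : ℝ[X]) :
    selfIntersections A B C D ⊆ insert 0 (⋃ k ∈ polarShifts A B C D,
      (fun p => polarCurve A B C D p.1) '' polarSolutions A B C D k) := by
  rintro _ ⟨t, s, ht, hs, hne, rfl, hts⟩
  by_cases hr0 : ratFun A B t = 0
  · left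
    simp [polarCurve, hr0]
  · obtain ⟨k, hk⟩ := exists_polarRel_of_polar_eq hr0 hts.symm
    exact .inr (mem_biUnion ⟨t, s, ht, hs, hne, hk⟩ ⟨(t, s), ⟨ht, hs, hne, hk⟩, rfl⟩)

theorem polarShifts_subset (A B C D : ℝ[X]) :
    polarShifts A B C D ⊆ ⋃ p ∈ selfIntersections A B C D,
      ⋃ q ∈ (polarDomain B D ∩ polarCurve A B C D ⁻¹' {p}) ×ˢ
        (polarDomain B D ∩ polarCurve A B C D ⁻¹' {p}),
      {k | PolarRel k (ratFun A B q.1) (ratFun C D q.1) (ratFun A B q.2) (ratFun C D q.2)} := by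
  rintro k ⟨t, s, ht, hs, hne, hk⟩
  have hts : polarCurve A B C D t = polarCurve A B C D s := hk.polar_eq
  exact mem_biUnion ⟨t, s, ht, hs, hne, rfl, hts.symm⟩
    (mem_biUnion (x := (t, s)) ⟨⟨ht, rfl⟩, hs, hts.symm⟩ hk)

end PolarCurve

theorem infinitely_many_self_intersections_iff
    (A B C D : Polynomial ℝ)
    (hAB : IsCoprime A B) (hCD : IsCoprime C D)
    (hr : ¬ (A.natDegree = 0 ∧ B.natDegree = 0))
    (hθ : ¬ (C.natDegree = 0 ∧ D.natDegree = 0))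
    (hproper : IsProperPolar A B C D) :
    (selfIntersections A B C D).Infinite ↔
    {k : ℤ | ∃ t s : ℝ, t ∈ polarDomain B D ∧ s ∈ polarDomain B D ∧ t ≠ s ∧
      ((ratFun A B t = ratFun A B s ∧
          ratFun C D t = ratFun C D s + 2 * (k : ℝ) * Real.pi) ∨
       (ratFun A B t = -(ratFun A B s) ∧
          ratFun C D t = ratFun C D s + (2 * (k : ℝ) + 1) * Real.pi))}.Infinite := by
  have hr' : IsReducedNonconst A B := ⟨hAB, hr⟩
  have hθ' : IsReducedNonconst C D := ⟨hCD, hθ⟩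
  change (selfIntersections A B C D).Infinite ↔ (polarShifts A B C D).Infinite
  refine not_congr ⟨fun hSI => ?_, fun hK => ?_⟩
  · refine (hSI.biUnion fun p _ => ?_).subset (polarShifts_subset A B C D)
    exact ((finite_polarFiber hr' p).prod (finite_polarFiber hr' p)).biUnion
      fun q _ => Subsingleton.finite fun k hk k' hk' => hk.unique hk'
  · refine ((hK.biUnion fun k _ => ?_).insert 0).subset (selfIntersections_subset A B C D)
    exact (finite_polarSolutions hr' hθ' hproper k).image _
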